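/- arXiv:2009.04892 — 2 statements merged into one kernel-verified Lean document; each statement's English description precedes it below -/
import Mathlib

section
/- Let F be a t-repeated k-non-signaling function that is permutation folded and (1-ε)-consistent, with k ≥ 2. Then the flattening flat(F): D → Σ, defined by answering a query set S = {q_1,...,q_s} (s ≤ t) via a single query to F on a vector Q^S whose first s entries are q_1,...,q_s, is an (ε, t)-almost-non-signaling function: for any two query sets S, T ⊆ D of size at most t, the marginal distributions of flat(F)_S and flat(F)_T restricted to S ∩ T are ε-close in total variation distance. -/
noncomputable def prob {α : Type*} (p : PMF α) (E : Set α) : ℝ :=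
  (p.toOuterMeasure E).toReal

def restrictAssign {D A : Type*} {S T : Finset D} (h : T ⊆ S)
    (f : {x // x ∈ S} → A) : {x // x ∈ T} → A :=
  fun x => f ⟨x.1, h x.2⟩

noncomputable def marginal {D A : Type*} {S : Finset D} (p : PMF ({x // x ∈ S} → A))
    {T : Finset D} (h : T ⊆ S) : PMF ({x // x ∈ T} → A) :=
  p.map (restrictAssign h)

def IsNonSignaling {D A : Type*} [DecidableEq D] (k : ℕ)
    (F : (S : Finset D) → PMF ({x // x ∈ S} → A)) : Prop :=
  ∀ S T : Finset D, S.card ≤ k → T.card ≤ k →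
    marginal (F S) (Finset.inter_subset_left : S ∩ T ⊆ S) =
    marginal (F T) (Finset.inter_subset_right : S ∩ T ⊆ T)

/-- An `(ε, k)`-almost-non-signaling function: marginals on intersections of query
sets of size at most `k` are `ε`-close in total variation distance. -/
def IsAlmostNonSignaling {D A : Type*} [DecidableEq D] (ε : ℝ) (k : ℕ)
    (F : (S : Finset D) → PMF ({x // x ∈ S} → A)) : Prop :=
  ∀ S T : Finset D, S.card ≤ k → T.card ≤ k →
    ∀ E : Set ({x // x ∈ S ∩ T} → A),
      |prob (marginal (F S) (Finset.inter_subset_left : S ∩ T ⊆ S)) E -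
       prob (marginal (F T) (Finset.inter_subset_right : S ∩ T ⊆ T)) E| ≤ ε

def permQ {t : ℕ} {β : Type*} (π : Equiv.Perm (Fin t)) (Q : Fin t → β) : Fin t → β :=
  fun j => Q (π j)

def IsPermFolded {t : ℕ} {D A : Type*} [DecidableEq D] (k : ℕ)
    (F : (S : Finset (Fin t → D)) → PMF ({Q // Q ∈ S} → (Fin t → A))) : Prop :=
  ∀ (ℓ : ℕ) (Q : Fin ℓ → (Fin t → D)) (π : Fin ℓ → Equiv.Perm (Fin t))
    (b : Fin ℓ → (Fin t → A)), ℓ ≤ k →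
    prob (F (Finset.image Q Finset.univ))
      {f | ∀ i : Fin ℓ, f ⟨Q i, Finset.mem_image_of_mem _ (Finset.mem_univ i)⟩ = b i} =
    prob (F (Finset.image (fun i => permQ (π i) (Q i)) Finset.univ))
      {f | ∀ i : Fin ℓ, f ⟨permQ (π i) (Q i),
          Finset.mem_image_of_mem _ (Finset.mem_univ i)⟩ = permQ (π i) (b i)}

def IsConsistentRep {t : ℕ} {D A : Type*} [DecidableEq D] (ε : ℝ)
    (F : (S : Finset (Fin t → D)) → PMF ({Q // Q ∈ S} → (Fin t → A))) : Prop :=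
  ∀ Q Q' : Fin t → D,
    prob (F {Q, Q'})
      {f | ∀ j : Fin t, Q j = Q' j →
        f ⟨Q, by simp⟩ j = f ⟨Q', by simp⟩ j} ≥ 1 - ε

noncomputable def padVec {D : Type*} [Inhabited D] (t : ℕ) (S : Finset D) : Fin t → D :=
  fun j => if h : (j : ℕ) < S.toList.length then S.toList.get ⟨j, h⟩ else default

/-- The flattening of a `t`-repeated non-signaling function: a query set `S` is answered
via a single query to `F` on a vector whose first `S.card` coordinates enumerate `S`. -/
noncomputable def flatten {D A : Type*} [DecidableEq D] [Inhabited D] [Inhabited A] (t : ℕ)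
    (F : (S : Finset (Fin t → D)) → PMF ({Q // Q ∈ S} → (Fin t → A)))
    (S : Finset D) : PMF ({x // x ∈ S} → A) :=
  (F {padVec t S}).map (fun f x =>
    if h : S.toList.idxOf x.1 < t then
      f ⟨padVec t S, Finset.mem_singleton_self _⟩ ⟨S.toList.idxOf x.1, h⟩
    else default)


/-!
The answers of `flatten t F` on `S` and on `T`, restricted to `S ∩ T`, are read off single
queries `padVec t S` and `padVec t T` at the slots where the elements of `S ∩ T` sit. Permuting
the coordinates of `padVec t T` moves these elements to the slots they occupy in `padVec t S`;
by folding this changes nothing. Asked jointly (possible since `k ≥ 2`, and harmless by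
non-signaling), the two query vectors now agree on the relevant slots, so by consistency the
answers there agree except with probability `ε`.
-/

open Finset

section Prob

variable {α β : Type*}

lemma prob_map (p : PMF α) (f : α → β) (E : Set β) :
    prob (p.map f) E = prob p (f ⁻¹' E) := by
  rw [prob, PMF.toOuterMeasure_map_apply, prob]

lemma PMF.toOuterMeasure_add_compl (p : PMF α) (s : Set α) :
    p.toOuterMeasure s + p.toOuterMeasure sᶜ = 1 := by
  rw [PMF.toOuterMeasure_apply, PMF.toOuterMeasure_apply, ← ENNReal.tsum_add, ← Pi.add_def,
    Set.indicator_self_add_compl, PMF.tsum_coe]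

lemma PMF.toOuterMeasure_ne_top (p : PMF α) (s : Set α) : p.toOuterMeasure s ≠ ⊤ :=
  ne_top_of_le_ne_top ENNReal.one_ne_top (p.toOuterMeasure_add_compl s ▸ le_self_add)

lemma prob_mono (p : PMF α) {s t : Set α} (h : s ⊆ t) : prob p s ≤ prob p t :=
  ENNReal.toReal_mono (p.toOuterMeasure_ne_top t) (MeasureTheory.measure_mono h)

lemma prob_union_le (p : PMF α) (s t : Set α) : prob p (s ∪ t) ≤ prob p s + prob p t := by
  rw [prob, prob, prob, ← ENNReal.toReal_add (p.toOuterMeasure_ne_top s)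
    (p.toOuterMeasure_ne_top t)]
  exact ENNReal.toReal_mono (by simp [PMF.toOuterMeasure_ne_top])
    (MeasureTheory.measure_union_le s t)

lemma prob_add_prob_compl (p : PMF α) (s : Set α) : prob p s + prob p sᶜ = 1 := by
  rw [prob, prob, ← ENNReal.toReal_add (p.toOuterMeasure_ne_top s)
    (p.toOuterMeasure_ne_top sᶜ), p.toOuterMeasure_add_compl, ENNReal.toReal_one]

lemma abs_prob_sub_le_of_inter_eq (p : PMF α) {s t G : Set α} {ε : ℝ}
    (hG : 1 - ε ≤ prob p G) (hst : s ∩ G = t ∩ G) : |prob p s - prob p t| ≤ ε := by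
  have hGc : prob p Gᶜ ≤ ε := by linarith [prob_add_prob_compl p G]
  have key : ∀ {u v : Set α}, u ∩ G = v ∩ G → prob p u - prob p v ≤ ε := by
    intro u v huv
    calc prob p u - prob p v
        ≤ prob p (u ∩ G ∪ Gᶜ) - prob p (v ∩ G) := by
          gcongr
          · exact prob_mono p fun x hx => (em (x ∈ G)).imp (⟨hx, ·⟩) id
          · exact prob_mono p Set.inter_subset_left
      _ ≤ prob p Gᶜ := by rw [huv]; linarith [prob_union_le p (v ∩ G) Gᶜ]
      _ ≤ ε := hGc
  exact abs_sub_le_iff.2 ⟨key hst, key hst.symm⟩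

lemma abs_prob_map_sub_le_of_eqOn (p : PMF α) {f g : α → β} {G : Set α} {ε : ℝ}
    (hG : 1 - ε ≤ prob p G) (hfg : Set.EqOn f g G) (E : Set β) :
    |prob (p.map f) E - prob (p.map g) E| ≤ ε := by
  rw [prob_map, prob_map]
  refine abs_prob_sub_le_of_inter_eq p hG (Set.ext fun x => ?_)
  exact and_congr_left fun hx => by rw [Set.mem_preimage, Set.mem_preimage, hfg hx]

lemma PMF.map_apply_of_injective (p : PMF α) {f : α → β} (hf : f.Injective) (a : α) :
    p.map f (f a) = p a := by
  rw [PMF.map_apply, tsum_eq_single a fun a' ha' => if_neg (hf.ne ha').symm, if_pos rfl]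

end Prob

section AnswerLaw

variable {γ B : Type*} (F : (S : Finset γ) → PMF ({x // x ∈ S} → B))

noncomputable def answerLaw (V : Finset γ) {v : γ} (hv : v ∈ V) : PMF B :=
  (F V).map fun f => f ⟨v, hv⟩

noncomputable def queryLaw [DecidableEq γ] (v : γ) : PMF B :=
  answerLaw F {v} (mem_singleton_self v)

variable {F}

lemma answerLaw_congr {V W : Finset γ} (h : V = W) {v : γ} (hv : v ∈ V) (hw : v ∈ W) :
    answerLaw F V hv = answerLaw F W hw := by
  subst h; rfl

lemma prob_eval_eq_answerLaw (V : Finset γ) {v : γ} (hv : v ∈ V) (b : B) :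
    prob (F V) {f | f ⟨v, hv⟩ = b} = (answerLaw F V hv b).toReal := by
  rw [← PMF.toOuterMeasure_apply_singleton, answerLaw, ← prob, prob_map]
  rfl

lemma IsNonSignaling.answerLaw_eq [DecidableEq γ] {k : ℕ} (hns : IsNonSignaling k F)
    {V W : Finset γ} (hV : V.card ≤ k) (hW : W.card ≤ k) {v : γ} (hv : v ∈ V)
    (hw : v ∈ W) :
    answerLaw F V hv = answerLaw F W hw := by
  have h := congrArg (PMF.map fun g => g ⟨v, mem_inter.2 ⟨hv, hw⟩⟩) (hns V W hV hW)
  rwa [marginal, marginal, PMF.map_comp, PMF.map_comp] at h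

end AnswerLaw

section Repeated

variable {t k : ℕ} {D A : Type*} [DecidableEq D]
  {F : (S : Finset (Fin t → D)) → PMF ({Q // Q ∈ S} → (Fin t → A))}

lemma permQ_injective (σ : Equiv.Perm (Fin t)) :
    (permQ σ : (Fin t → A) → Fin t → A).Injective :=
  σ.surjective.injective_comp_right

lemma IsPermFolded.queryLaw_permQ (hfold : IsPermFolded k F) (hk : 1 ≤ k)
    (R : Fin t → D) (σ : Equiv.Perm (Fin t)) :
    queryLaw F (permQ σ R) = (queryLaw F R).map (permQ σ) := by
  refine PMF.ext fun b => ?_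
  obtain ⟨c, rfl⟩ : ∃ c, permQ σ c = b :=
    ⟨permQ σ⁻¹ b, funext fun j => by simp [permQ]⟩
  rw [PMF.map_apply_of_injective _ (permQ_injective σ)]
  have h := hfold 1 (fun _ => R) (fun _ => σ) (fun _ => c) hk
  simp only [Fin.forall_fin_one, prob_eval_eq_answerLaw] at h
  rw [answerLaw_congr (image_const univ_nonempty R) _ (mem_singleton_self R),
    answerLaw_congr (image_const univ_nonempty (permQ σ R)) _ (mem_singleton_self _)] at h
  exact ((ENNReal.toReal_eq_toReal_iff' (PMF.apply_ne_top _ _) (PMF.apply_ne_top _ _)).1 h).symm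

lemma IsConsistentRep.abs_prob_sub_le {ε : ℝ} (hcons : IsConsistentRep ε F)
    (Q Q' : Fin t → D) {X : Type*} (ι : X → Fin t) (hι : ∀ x, Q (ι x) = Q' (ι x))
    (E : Set (X → A)) :
    |prob ((answerLaw F {Q, Q'} (mem_insert_self Q _)).map (· ∘ ι)) E -
      prob ((answerLaw F {Q, Q'} (mem_insert_of_mem (mem_singleton_self Q'))).map (· ∘ ι)) E|
      ≤ ε := by
  rw [answerLaw, answerLaw, PMF.map_comp, PMF.map_comp]
  exact abs_prob_map_sub_le_of_eqOn _ (hcons Q Q') (fun f hf => funext fun x => hf (ι x) (hι x)) E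

lemma abs_prob_queryLaw_sub_le {ε : ℝ} (hk : 2 ≤ k) (hns : IsNonSignaling k F)
    (hcons : IsConsistentRep ε F) (Q Q' : Fin t → D) {X : Type*} (ι : X → Fin t)
    (hι : ∀ x, Q (ι x) = Q' (ι x)) (E : Set (X → A)) :
    |prob ((queryLaw F Q).map (· ∘ ι)) E - prob ((queryLaw F Q').map (· ∘ ι)) E|
      ≤ ε := by
  have h1 : ({Q} : Finset _).card ≤ k := by rw [card_singleton]; omega
  have h1' : ({Q'} : Finset _).card ≤ k := by rw [card_singleton]; omega
  have h2 : ({Q, Q'} : Finset _).card ≤ k := card_le_two.trans hk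
  unfold queryLaw
  rw [hns.answerLaw_eq h1 h2 _ (mem_insert_self Q _),
    hns.answerLaw_eq h1' h2 _ (mem_insert_of_mem (mem_singleton_self Q'))]
  exact hcons.abs_prob_sub_le Q Q' ι hι E

end Repeated

section Flatten

variable {t : ℕ} {D A : Type*} [DecidableEq D] [Inhabited D] {S : Finset D}

noncomputable def slot (hS : S.card ≤ t) {x : D} (hx : x ∈ S) : Fin t :=
  ⟨S.toList.idxOf x, (List.idxOf_lt_length_iff.2 (mem_toList.2 hx)).trans_le
    ((length_toList S).trans_le hS)⟩

lemma padVec_slot (hS : S.card ≤ t) {x : D} (hx : x ∈ S) : padVec t S (slot hS hx) = x := by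
  unfold padVec slot
  rw [dif_pos (List.idxOf_lt_length_iff.2 (mem_toList.2 hx))]
  exact List.getElem_idxOf _

lemma marginal_flatten [Inhabited A]
    (F : (S : Finset (Fin t → D)) → PMF ({Q // Q ∈ S} → (Fin t → A)))
    (hS : S.card ≤ t) {U : Finset D} (hU : U ⊆ S) :
    marginal (flatten t F S) hU =
      (queryLaw F (padVec t S)).map (· ∘ fun x : {x // x ∈ U} => slot hS (hU x.2)) := by
  unfold queryLaw
  rw [marginal, flatten, answerLaw, PMF.map_comp, PMF.map_comp]
  congr 1
  funext f x
  exact dif_pos (slot hS (hU x.2)).isLt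

end Flatten

/-- the flattening of a permutation-folded `(1-ε)`-consistent `t`-repeated
`k`-non-signaling function (`k ≥ 2`) is an `(ε, t)`-almost-non-signaling function. -/
theorem flatten_almost_nonsignaling {t k : ℕ} {D A : Type*}
    [DecidableEq D] [Inhabited D] [Inhabited A]
    (F : (S : Finset (Fin t → D)) → PMF ({Q // Q ∈ S} → (Fin t → A)))
    (hk : 2 ≤ k)
    (hns : IsNonSignaling k F)
    (hfold : IsPermFolded k F)
    (ε : ℝ)
    (hcons : IsConsistentRep ε F) :
    IsAlmostNonSignaling ε t (flatten t F) := by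
  intro S T hS hT E
  let ιS := fun x : {x // x ∈ S ∩ T} => slot hS (mem_of_mem_inter_left x.2)
  let ιT := fun x : {x // x ∈ S ∩ T} => slot hT (mem_of_mem_inter_right x.2)
  have hιS (x) : padVec t S (ιS x) = x := padVec_slot hS _
  have hιT (x) : padVec t T (ιT x) = x := padVec_slot hT _
  obtain ⟨σ, hσ⟩ := Equiv.Perm.exists_extending_pair ιS ιT
    (fun x y (h : ιS x = ιS y) => Subtype.ext (by rw [← hιS x, ← hιS y, h]))
    (fun x y (h : ιT x = ιT y) => Subtype.ext (by rw [← hιT x, ← hιT y, h]))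
  have hT_side : marginal (flatten t F T) inter_subset_right =
      (queryLaw F (permQ σ (padVec t T))).map (· ∘ ιS) := by
    rw [marginal_flatten F hT, hfold.queryLaw_permQ (by omega), PMF.map_comp]
    congr 1
    funext u x
    exact congrArg u (hσ x).symm
  rw [marginal_flatten F hS, hT_side]
  refine abs_prob_queryLaw_sub_le hk hns hcons _ _ ιS (fun x => ?_) E
  rw [hιS, permQ, hσ, hιT]
end

section
/- Self-correction of a 2t-repeated k-non-signaling function is non-signaling: given a 2t-repeated k-non-signaling function F from ({0,1}^n)^{2t} to ({0,1})^{2t}, its self-correction F̂ — which answers a query set {Q_1,...,Q_s}, s ≤ ⌊k/2⌋, by sampling independent uniform R_i, W_i ∈ ({0,1}^n)^t, querying F on ∪_i {[R_i;W_i],[Q_i+R_i;W_i]}, and outputting F̂(Q_i) = first t coordinates of F([R_i;W_i]) + F([Q_i+R_i;W_i]) — is a well-defined t-repeated ⌊k/2⌋-non-signaling function; i.e., for any two query sets S, T of size at most ⌊k/2⌋, the marginal distributions of F̂_S and F̂_T restricted to S ∩ T are equal. -/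
/-- A `2t`-repeated non-signaling function over `{0,1}^n`. -/
abbrev NSFam (n t : ℕ) :=
  (S : Finset (Fin t → Fin n → ZMod 2)) → PMF ({Q // Q ∈ S} → (Fin t → ZMod 2))

/-- Acceptance probability of the linearity test: sample uniform `X, Y`, query `F` on
`{X, Y, X+Y}` and check `F(X) + F(Y) = F(X+Y)` in all coordinates. -/
noncomputable def linTestAccept {n t : ℕ} (F : NSFam n t) : ℝ :=
  prob ((PMF.uniformOfFintype ((Fin t → Fin n → ZMod 2) × (Fin t → Fin n → ZMod 2))).bind
    fun p => (F {p.1, p.2, p.1 + p.2}).map fun f =>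
      (f ⟨p.1, by simp⟩, f ⟨p.2, by simp⟩, f ⟨p.1 + p.2, by simp⟩))
    {y | y.1 + y.2.1 = y.2.2}

/-- Acceptance probability of the consistency test on a `2t`-repeated function: sample
uniform `W, Z₁, Z₂`, query `F` on `{[W;Z₁], [W;Z₂]}` and check that the answers agree
on the first `t` coordinates. -/
noncomputable def consTestAccept {n t : ℕ} (F : NSFam n (t + t)) : ℝ :=
  prob ((PMF.uniformOfFintype ((Fin t → Fin n → ZMod 2) × (Fin t → Fin n → ZMod 2) ×
      (Fin t → Fin n → ZMod 2))).bind
    fun w => (F {Fin.append w.1 w.2.1, Fin.append w.1 w.2.2}).map fun f =>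
      (f ⟨Fin.append w.1 w.2.1, by simp⟩, f ⟨Fin.append w.1 w.2.2, by simp⟩))
    {y : (Fin (t + t) → ZMod 2) × (Fin (t + t) → ZMod 2) |
      ∀ j : Fin t, y.1 (Fin.castAdd t j) = y.2 (Fin.castAdd t j)}

/-- The self-correction of a `2t`-repeated non-signaling function: a query `Q` is
answered by sampling fresh independent uniform `R, W`, querying `F` on
`{[R;W], [Q+R;W]}`, and returning the first `t` coordinates of
`F([R;W]) + F([Q+R;W])`. -/
noncomputable def selfCorrect {n t : ℕ} (F : NSFam n (t + t)) : NSFam n t :=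
  fun S =>
    (PMF.uniformOfFintype (({Q // Q ∈ S} → (Fin t → Fin n → ZMod 2)) ×
        ({Q // Q ∈ S} → (Fin t → Fin n → ZMod 2)))).bind fun RW =>
      (F (Finset.univ.biUnion fun Q : {Q // Q ∈ S} =>
          {Fin.append (RW.1 Q) (RW.2 Q), Fin.append (Q.1 + RW.1 Q) (RW.2 Q)})).map
        fun f Q j =>
          f ⟨Fin.append (RW.1 Q) (RW.2 Q),
              Finset.mem_biUnion.mpr ⟨Q, Finset.mem_univ _, Finset.mem_insert_self _ _⟩⟩
            (Fin.castAdd t j)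
          + f ⟨Fin.append (Q.1 + RW.1 Q) (RW.2 Q),
              Finset.mem_biUnion.mpr ⟨Q, Finset.mem_univ _,
                Finset.mem_insert_of_mem (Finset.mem_singleton_self _)⟩⟩
            (Fin.castAdd t j)

/-! Restricting `F̂_S` to `U ⊆ S` amounts to restricting the uniform shifts `(R, W)` to `U`,
which leaves them uniform, and marginalizing `F` from the at most `2|S| ≤ k` points queried for
`S` to the points queried for `U`, which by non-signaling gives `F` on the latter. So `F̂_S`
marginalizes to `F̂_U`, and the marginals of `F̂_S` and `F̂_T` on `S ∩ T` are both `F̂_{S ∩ T}`. -/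

open scoped ENNReal

namespace PMF

theorem map_uniformOfFintype_equiv {α β : Type*} [Fintype α] [Nonempty α] [Fintype β]
    [Nonempty β] (e : α ≃ β) : (uniformOfFintype α).map e = uniformOfFintype β := by
  ext b
  rw [map_apply, tsum_eq_single (e.symm b) fun a ha => if_neg fun h => ha (by simp [h])]
  simp [Fintype.card_congr e]

theorem map_uniformOfFintype_fst {α β : Type*} [Fintype α] [Nonempty α] [Fintype β]
    [Nonempty β] : (uniformOfFintype (α × β)).map Prod.fst = uniformOfFintype α := by
  classical
  ext a
  simp only [map_apply, tsum_fintype, Fintype.sum_prod_type, uniformOfFintype_apply]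
  simp [Fintype.card_prod, ENNReal.mul_inv, ← mul_assoc,
    mul_right_comm _ _ (Fintype.card β : ℝ≥0∞)⁻¹, ENNReal.mul_inv_cancel]

end PMF

section Marginal

variable {D A : Type*}

theorem marginal_marginal {S U T : Finset D} (p : PMF ({x // x ∈ S} → A)) (hU : U ⊆ S)
    (hT : T ⊆ U) : marginal (marginal p hU) hT = marginal p (hT.trans hU) :=
  PMF.map_comp _ _ _

@[simp]
theorem marginal_self {S : Finset D} (p : PMF ({x // x ∈ S} → A)) (h : S ⊆ S) :
    marginal p h = p :=
  PMF.map_id p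

theorem IsNonSignaling.marginal_eq [DecidableEq D] {k : ℕ}
    {F : (S : Finset D) → PMF ({x // x ∈ S} → A)} (hF : IsNonSignaling k F) {U S : Finset D}
    (hU : U ⊆ S) (hS : S.card ≤ k) : marginal (F S) hU = F U := by
  have hUS : U ⊆ S ∩ U := Finset.subset_inter hU subset_rfl
  simpa [marginal_marginal] using
    congrArg (marginal · hUS) (hF S U hS ((Finset.card_le_card hU).trans hS))

def restrictSdiffEquiv [DecidableEq D] {U S : Finset D} (h : U ⊆ S) :
    ({x // x ∈ S} → A) ≃ ({x // x ∈ U} → A) × ({x // x ∈ S \ U} → A) where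
  toFun f := (restrictAssign h f, restrictAssign Finset.sdiff_subset f)
  invFun p x :=
    if hx : x.1 ∈ U then p.1 ⟨x.1, hx⟩ else p.2 ⟨x.1, Finset.mem_sdiff.mpr ⟨x.2, hx⟩⟩
  left_inv f := by
    funext x
    by_cases hx : x.1 ∈ U <;> simp [restrictAssign, hx]
  right_inv p := by
    refine Prod.ext (funext fun x => ?_) (funext fun x => ?_)
    · simp [restrictAssign, x.2]
    · simp [restrictAssign, (Finset.mem_sdiff.mp x.2).2]

theorem marginal_uniformOfFintype [DecidableEq D] [Fintype A] [Nonempty A] {U S : Finset D}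
    (h : U ⊆ S) :
    marginal (PMF.uniformOfFintype ({x // x ∈ S} → A)) h =
      PMF.uniformOfFintype ({x // x ∈ U} → A) := by
  rw [marginal, show restrictAssign h = Prod.fst ∘ restrictSdiffEquiv (A := A) h from rfl,
    ← PMF.map_comp, PMF.map_uniformOfFintype_equiv, PMF.map_uniformOfFintype_fst]

theorem map_restrictAssign_prod_uniformOfFintype [DecidableEq D] [Fintype A] [Nonempty A]
    {U S : Finset D} (h : U ⊆ S) :
    (PMF.uniformOfFintype (({x // x ∈ S} → A) × ({x // x ∈ S} → A))).map
        (fun p => (restrictAssign h p.1, restrictAssign h p.2)) =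
      PMF.uniformOfFintype (({x // x ∈ U} → A) × ({x // x ∈ U} → A)) := by
  let eS := Equiv.arrowProdEquivProdArrow {x // x ∈ S} (fun _ => A) (fun _ => A)
  let eU := Equiv.arrowProdEquivProdArrow {x // x ∈ U} (fun _ => A) (fun _ => A)
  rw [show (fun p => (restrictAssign h p.1, restrictAssign h p.2)) =
      eU ∘ restrictAssign h ∘ eS.symm from rfl, ← PMF.map_comp, ← PMF.map_comp,
    PMF.map_uniformOfFintype_equiv, ← marginal, marginal_uniformOfFintype,
    PMF.map_uniformOfFintype_equiv]

end Marginal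

section SelfCorrection

variable {n t : ℕ}

/-- The random shifts `(R_Q, W_Q)_{Q ∈ S}` drawn by the self-correction on the query set `S`. -/
abbrev Shifts (n t : ℕ) (S : Finset (Fin t → Fin n → ZMod 2)) :=
  ({Q // Q ∈ S} → (Fin t → Fin n → ZMod 2)) × ({Q // Q ∈ S} → (Fin t → Fin n → ZMod 2))

def selfCorrectQueries (S : Finset (Fin t → Fin n → ZMod 2)) (RW : Shifts n t S) :
    Finset (Fin (t + t) → Fin n → ZMod 2) :=
  Finset.univ.biUnion fun Q : {Q // Q ∈ S} =>
    {Fin.append (RW.1 Q) (RW.2 Q), Fin.append (Q.1 + RW.1 Q) (RW.2 Q)}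

def selfCorrectAnswer (S : Finset (Fin t → Fin n → ZMod 2)) (RW : Shifts n t S)
    (f : {x // x ∈ selfCorrectQueries S RW} → (Fin (t + t) → ZMod 2)) :
    {Q // Q ∈ S} → Fin t → ZMod 2 := fun Q j =>
  f ⟨Fin.append (RW.1 Q) (RW.2 Q),
      Finset.mem_biUnion.mpr ⟨Q, Finset.mem_univ _, Finset.mem_insert_self _ _⟩⟩
    (Fin.castAdd t j)
  + f ⟨Fin.append (Q.1 + RW.1 Q) (RW.2 Q),
      Finset.mem_biUnion.mpr ⟨Q, Finset.mem_univ _,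
        Finset.mem_insert_of_mem (Finset.mem_singleton_self _)⟩⟩
    (Fin.castAdd t j)

theorem selfCorrect_eq_bind (F : NSFam n (t + t)) (S : Finset (Fin t → Fin n → ZMod 2)) :
    selfCorrect F S = (PMF.uniformOfFintype (Shifts n t S)).bind fun RW =>
      (F (selfCorrectQueries S RW)).map (selfCorrectAnswer S RW) :=
  rfl

theorem card_selfCorrectQueries_le (S : Finset (Fin t → Fin n → ZMod 2)) (RW : Shifts n t S) :
    (selfCorrectQueries S RW).card ≤ 2 * S.card := by
  calc (selfCorrectQueries S RW).card
      ≤ ∑ Q : {Q // Q ∈ S}, ({Fin.append (RW.1 Q) (RW.2 Q),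
          Fin.append (Q.1 + RW.1 Q) (RW.2 Q)} : Finset (Fin (t + t) → Fin n → ZMod 2)).card :=
        Finset.card_biUnion_le
    _ ≤ ∑ _Q : {Q // Q ∈ S}, 2 :=
        Finset.sum_le_sum fun Q _ => (Finset.card_insert_le _ _).trans (by simp)
    _ = 2 * S.card := by simp [mul_comm]

def restrictShifts {U S : Finset (Fin t → Fin n → ZMod 2)} (hU : U ⊆ S) (RW : Shifts n t S) :
    Shifts n t U :=
  (restrictAssign hU RW.1, restrictAssign hU RW.2)

theorem map_restrictShifts_uniformOfFintype {U S : Finset (Fin t → Fin n → ZMod 2)}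
    (hU : U ⊆ S) :
    (PMF.uniformOfFintype (Shifts n t S)).map (restrictShifts hU) =
      PMF.uniformOfFintype (Shifts n t U) :=
  map_restrictAssign_prod_uniformOfFintype hU

theorem selfCorrectQueries_restrictShifts_subset {U S : Finset (Fin t → Fin n → ZMod 2)}
    (hU : U ⊆ S) (RW : Shifts n t S) :
    selfCorrectQueries U (restrictShifts hU RW) ⊆ selfCorrectQueries S RW := by
  intro x hx
  obtain ⟨Q, -, hx⟩ := Finset.mem_biUnion.mp hx
  exact Finset.mem_biUnion.mpr ⟨⟨Q.1, hU Q.2⟩, Finset.mem_univ _, hx⟩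

theorem restrictAssign_comp_selfCorrectAnswer {U S : Finset (Fin t → Fin n → ZMod 2)}
    (hU : U ⊆ S) (RW : Shifts n t S) :
    restrictAssign hU ∘ selfCorrectAnswer S RW =
      selfCorrectAnswer U (restrictShifts hU RW) ∘
        restrictAssign (selfCorrectQueries_restrictShifts_subset hU RW) :=
  rfl

theorem marginal_selfCorrect {k : ℕ} {F : NSFam n (t + t)} (hF : IsNonSignaling k F)
    {U S : Finset (Fin t → Fin n → ZMod 2)} (hU : U ⊆ S) (hS : S.card ≤ k / 2) :
    marginal (selfCorrect F S) hU = selfCorrect F U := by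
  have hanswer (RW : Shifts n t S) :
      ((F (selfCorrectQueries S RW)).map (selfCorrectAnswer S RW)).map (restrictAssign hU) =
        (F (selfCorrectQueries U (restrictShifts hU RW))).map
          (selfCorrectAnswer U (restrictShifts hU RW)) := by
    rw [PMF.map_comp, restrictAssign_comp_selfCorrectAnswer, ← PMF.map_comp, ← marginal,
      hF.marginal_eq _ ((card_selfCorrectQueries_le S RW).trans (by omega))]
  rw [selfCorrect_eq_bind, marginal, PMF.map_bind]
  simp_rw [hanswer]
  rw [selfCorrect_eq_bind, ← map_restrictShifts_uniformOfFintype hU, PMF.bind_map]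
  rfl

end SelfCorrection

/-- the self-correction of a `2t`-repeated `k`-non-signaling function is a
well-defined `t`-repeated `⌊k/2⌋`-non-signaling function: for any two query sets of size
at most `⌊k/2⌋`, the marginals of the self-correction on their intersection agree. -/
theorem selfCorrect_nonsignaling {n t k : ℕ} (F : NSFam n (t + t))
    (hns : IsNonSignaling k F) :
    IsNonSignaling (k / 2) (selfCorrect F) := by
  intro S T hS hT
  rw [marginal_selfCorrect hns Finset.inter_subset_left hS,
    marginal_selfCorrect hns Finset.inter_subset_right hT]
end
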